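/- If the complete lattice tors A is upper semimodular, then every torsion class T in mod A satisfies T = T(S_T), where S_T is the set of all simple A-modules contained in T; that is, every torsion class is generated by the simple modules it contains. -/

import Mathlib

/-! Preamble: the category `mod A` of finite-dimensional right `A`-modules,
torsion(-free) classes, the complete lattice `tors A`, functorially finite
torsion classes, bricks, etc. -/

open Function

/-- A bundled finite-dimensional (i.e. finitely generated) right `A`-module,
realized as a left module over `Aᵐᵒᵖ`. -/
structure ModA (A : Type) [Ring A] : Type 1 where
  carrier : Type
  [isAddCommGroup : AddCommGroup carrier]
  [isModule : Module Aᵐᵒᵖ carrier]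
  [isFinite : Module.Finite Aᵐᵒᵖ carrier]

attribute [instance] ModA.isAddCommGroup ModA.isModule ModA.isFinite

namespace ModA

variable {A : Type} [Ring A]

instance : CoeSort (ModA A) Type := ⟨ModA.carrier⟩

end ModA

section TorsionTheory

variable {A : Type} [Ring A]

/-- A torsion class: a class of finite-dimensional right `A`-modules containing the
zero modules, closed under quotient modules and under extensions. -/
def IsTorsionClass (T : Set (ModA A)) : Prop :=
  (∀ N : ModA A, Subsingleton N.carrier → N ∈ T) ∧
  (∀ M N : ModA A, M ∈ T → ∀ f : M.carrier →ₗ[Aᵐᵒᵖ] N.carrier, Surjective f → N ∈ T) ∧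
  (∀ (X Y Z : ModA A) (f : X.carrier →ₗ[Aᵐᵒᵖ] Y.carrier) (g : Y.carrier →ₗ[Aᵐᵒᵖ] Z.carrier),
    Injective f → Surjective g → LinearMap.range f = LinearMap.ker g →
    X ∈ T → Z ∈ T → Y ∈ T)

/-- A torsion-free class: a class of finite-dimensional right `A`-modules containing the
zero modules, closed under submodules and under extensions. -/
def IsTorsionFreeClass (F : Set (ModA A)) : Prop :=
  (∀ N : ModA A, Subsingleton N.carrier → N ∈ F) ∧
  (∀ M N : ModA A, M ∈ F → ∀ f : N.carrier →ₗ[Aᵐᵒᵖ] M.carrier, Injective f → N ∈ F) ∧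
  (∀ (X Y Z : ModA A) (f : X.carrier →ₗ[Aᵐᵒᵖ] Y.carrier) (g : Y.carrier →ₗ[Aᵐᵒᵖ] Z.carrier),
    Injective f → Surjective g → LinearMap.range f = LinearMap.ker g →
    X ∈ F → Z ∈ F → Y ∈ F)

theorem isTorsionClass_sInter {S : Set (Set (ModA A))} (h : ∀ T ∈ S, IsTorsionClass T) :
    IsTorsionClass (⋂₀ S) := by
  refine ⟨fun N hN => ?_, fun M N hM f hf => ?_, fun X Y Z f g hf hg he hX hZ => ?_⟩
  · exact Set.mem_sInter.2 fun T hT => (h T hT).1 N hN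
  · exact Set.mem_sInter.2 fun T hT => (h T hT).2.1 M N (Set.mem_sInter.1 hM T hT) f hf
  · exact Set.mem_sInter.2 fun T hT =>
      (h T hT).2.2 X Y Z f g hf hg he (Set.mem_sInter.1 hX T hT) (Set.mem_sInter.1 hZ T hT)

theorem isTorsionFreeClass_sInter {S : Set (Set (ModA A))} (h : ∀ F ∈ S, IsTorsionFreeClass F) :
    IsTorsionFreeClass (⋂₀ S) := by
  refine ⟨fun N hN => ?_, fun M N hM f hf => ?_, fun X Y Z f g hf hg he hX hZ => ?_⟩
  · exact Set.mem_sInter.2 fun T hT => (h T hT).1 N hN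
  · exact Set.mem_sInter.2 fun T hT => (h T hT).2.1 M N (Set.mem_sInter.1 hM T hT) f hf
  · exact Set.mem_sInter.2 fun T hT =>
      (h T hT).2.2 X Y Z f g hf hg he (Set.mem_sInter.1 hX T hT) (Set.mem_sInter.1 hZ T hT)

end TorsionTheory

/-- `tors A`: the poset of all torsion classes in `mod A`, ordered by inclusion. -/
def Tors (A : Type) [Ring A] : Type 1 := {T : Set (ModA A) // IsTorsionClass T}

/-- `torf A`: the poset of all torsion-free classes in `mod A`, ordered by inclusion. -/
def Torf (A : Type) [Ring A] : Type 1 := {F : Set (ModA A) // IsTorsionFreeClass F}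

namespace Tors

variable {A : Type} [Ring A]

instance : PartialOrder (Tors A) := Subtype.partialOrder _

instance : InfSet (Tors A) :=
  ⟨fun S => ⟨⋂₀ (Subtype.val '' S),
    isTorsionClass_sInter (by rintro _ ⟨T, _, rfl⟩; exact T.2)⟩⟩

/-- `tors A` is a complete lattice, with meets given by intersections. -/
instance : CompleteLattice (Tors A) :=
  completeLatticeOfInf _ (fun S =>
    ⟨fun T hT => Set.sInter_subset_of_mem ⟨T, hT, rfl⟩,
     fun L hL => Set.subset_sInter (by rintro _ ⟨T, hT, rfl⟩; exact hL hT)⟩)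

end Tors

namespace Torf

variable {A : Type} [Ring A]

instance : PartialOrder (Torf A) := Subtype.partialOrder _

instance : InfSet (Torf A) :=
  ⟨fun S => ⟨⋂₀ (Subtype.val '' S),
    isTorsionFreeClass_sInter (by rintro _ ⟨T, _, rfl⟩; exact T.2)⟩⟩

/-- `torf A` is a complete lattice, with meets given by intersections. -/
instance : CompleteLattice (Torf A) :=
  completeLatticeOfInf _ (fun S =>
    ⟨fun T hT => Set.sInter_subset_of_mem ⟨T, hT, rfl⟩,
     fun L hL => Set.subset_sInter (by rintro _ ⟨T, hT, rfl⟩; exact hL hT)⟩)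

end Torf

section Defs

variable {A : Type} [Ring A]

/-- `T(C)`: the smallest torsion class containing the class `C` of modules. -/
def torsGen (C : Set (ModA A)) : Tors A := sInf {T : Tors A | C ⊆ T.1}

/-- `Fac M`: the class of all quotients of finite direct sums of copies of `M`. -/
def Fac (M : ModA A) : Set (ModA A) :=
  {N | ∃ (k : ℕ) (f : (Fin k → M.carrier) →ₗ[Aᵐᵒᵖ] N.carrier), Surjective f}

/-- A class of modules is functorially finite (as a torsion class) when it is
of the form `Fac M`. -/
def IsFFSet (X : Set (ModA A)) : Prop := ∃ M : ModA A, X = Fac M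

/-- A torsion class is functorially finite when it is of the form `Fac M`. -/
def IsFunctoriallyFinite (T : Tors A) : Prop := IsFFSet T.1

/-- The right Hom-orthogonal class `X^⊥`. -/
def rightPerp (X : Set (ModA A)) : Set (ModA A) :=
  {M | ∀ N ∈ X, ∀ f : N.carrier →ₗ[Aᵐᵒᵖ] M.carrier, f = 0}

/-- The left Hom-orthogonal class `^⊥X`. -/
def leftPerp (X : Set (ModA A)) : Set (ModA A) :=
  {N | ∀ M ∈ X, ∀ f : N.carrier →ₗ[Aᵐᵒᵖ] M.carrier, f = 0}

/-- A brick: a nonzero module all of whose nonzero endomorphisms are isomorphisms. -/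
def IsBrick (B : ModA A) : Prop :=
  Nontrivial B.carrier ∧
    ∀ f : B.carrier →ₗ[Aᵐᵒᵖ] B.carrier, f ≠ 0 → Bijective f

end Defs

/-- `f-tors A`: the poset of functorially finite torsion classes, ordered by inclusion. -/
def FTors (A : Type) [Ring A] : Type 1 := {T : Tors A // IsFunctoriallyFinite T}

instance {A : Type} [Ring A] : PartialOrder (FTors A) := Subtype.partialOrder _

section Simples

variable (A : Type) [Ring A]

/-- The type of simple objects of `mod A`. -/
def SimpleMod : Type 1 := {S : ModA A // IsSimpleModule Aᵐᵒᵖ S.carrier}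

/-- Isomorphism of simple modules, as an equivalence relation. -/
def simpleIsoSetoid : Setoid (SimpleMod A) where
  r S T := Nonempty (S.1.carrier ≃ₗ[Aᵐᵒᵖ] T.1.carrier)
  iseqv := ⟨fun _ => ⟨LinearEquiv.refl _ _⟩, fun ⟨e⟩ => ⟨e.symm⟩, fun ⟨e⟩ ⟨f⟩ => ⟨e.trans f⟩⟩

/-- The number of isomorphism classes of simple right `A`-modules. -/
noncomputable def numSimples : ℕ := Nat.card (Quotient (simpleIsoSetoid A))

end Simples

section Lattice

/-- Upper semimodularity: if `a` and `b` both cover `a ⊓ b`, then `a ⊔ b` covers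
both `a` and `b`. -/
def UpperSemimodular (α : Type*) [Lattice α] : Prop :=
  ∀ a b : α, a ⊓ b ⋖ a → a ⊓ b ⋖ b → a ⋖ a ⊔ b ∧ b ⋖ a ⊔ b

/-- Lower semimodularity: if `a ⊔ b` covers both `a` and `b`, then `a` and `b` both
cover `a ⊓ b`. -/
def LowerSemimodular (α : Type*) [Lattice α] : Prop :=
  ∀ a b : α, a ⋖ a ⊔ b → b ⋖ a ⊔ b → a ⊓ b ⋖ a ∧ a ⊓ b ⋖ b

/-- An element `x` of a complete lattice is completely join irreducible if the join of
all elements strictly below `x` is strictly below `x`. -/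
def CompletelyJoinIrred {α : Type*} [CompleteLattice α] (x : α) : Prop :=
  sSup {y | y < x} < x

end Lattice

/-- The statement that the poset `f-tors A` forms a lattice: any two functorially finite
torsion classes have a least upper bound and a greatest lower bound within `f-tors A`. -/
def FTorsIsLattice (A : Type) [Ring A] : Prop :=
  ∀ a b : FTors A, (∃ m, IsGLB {a, b} m) ∧ (∃ j, IsLUB {a, b} j)

/-- Upper semimodularity for the poset `f-tors A`. -/
def FTorsUpperSemimodular (A : Type) [Ring A] : Prop :=
  ∀ a b m j : FTors A, IsGLB {a, b} m → IsLUB {a, b} j →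
    m ⋖ a → m ⋖ b → a ⋖ j ∧ b ⋖ j

/-- Lower semimodularity for the poset `f-tors A`. -/
def FTorsLowerSemimodular (A : Type) [Ring A] : Prop :=
  ∀ a b m j : FTors A, IsGLB {a, b} m → IsLUB {a, b} j →
    a ⋖ j → b ⋖ j → m ⋖ a ∧ m ⋖ b

/-- A realization of a `K`-algebra `A` as a finite product of finite-dimensional
local `K`-algebras. -/
structure LocalAlgebraFactorization (K : Type) [Field K] (A : Type) [Ring A] [Algebra K A] where
  m : ℕ
  B : Fin m → Type
  [ringB : ∀ i, Ring (B i)]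
  [algB : ∀ i, Algebra K (B i)]
  finB : ∀ i, FiniteDimensional K (B i)
  localB : ∀ i, IsLocalRing (B i)
  equiv : A ≃ₐ[K] ∀ i, B i

/-- An indecomposable module: nonzero, and not the internal direct sum of two nonzero
submodules. -/
def IsIndecomposableModule (R M : Type*) [Ring R] [AddCommGroup M] [Module R M] : Prop :=
  Nontrivial M ∧ ∀ S T : Submodule R M, IsCompl S T → S = ⊥ ∨ T = ⊥

/-!
Every module `M` lies in `T(simple quotients of M)`, by induction on length: if `N` is the kernel
of a simple quotient `M → S₁`, each simple quotient `W` of `N` fits into an extension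
`0 → W → E → S₁ → 0` with `E` a quotient of `M`, so it suffices that `W ∈ T(simple quotients of E)`.
If not, then `W ≇ S₁`, so `T(S₁)` and `T(W)` are atoms of `tors A` with meet `⊥`, and
`T(S₁) < T(E) < T(S₁) ⊔ T(W)` contradicts upper semimodularity: `E ∉ T(S₁)` because no module
of `T(S₁)` has `W` as a subquotient, and `W ∉ T(E)` because the simple modules of `T(E)` are
quotients of `E`.
-/

theorem LinearMap.exists_comp_eq_of_ker_le {R M N P : Type*} [Ring R] [AddCommGroup M]
    [AddCommGroup N] [AddCommGroup P] [Module R M] [Module R N] [Module R P]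
    (g : M →ₗ[R] N) (f : M →ₗ[R] P) (hg : Surjective g) (hker : ker g ≤ ker f) :
    ∃ h : N →ₗ[R] P, h ∘ₗ g = f :=
  ⟨(ker g).liftQ f hker ∘ₗ (g.quotKerEquivOfSurjective hg).symm.toLinearMap, by ext; simp⟩

theorem exists_exact_quotient_of_surjective {R M S W : Type*} [Ring R] [AddCommGroup M]
    [AddCommGroup S] [AddCommGroup W] [Module R M] [Module R S] [Module R W]
    (f : M →ₗ[R] S) (u : LinearMap.ker f →ₗ[R] W) (hf : Surjective f) (hu : Surjective u) :
    ∃ (K : Submodule R M) (i : W →ₗ[R] M ⧸ K) (g : M ⧸ K →ₗ[R] S),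
      Injective i ∧ Surjective g ∧ LinearMap.range i = LinearMap.ker g := by
  -- `M ⧸ K` is the pushout of `ker f ↪ M` along `u`
  set K := (LinearMap.ker u).map (LinearMap.ker f).subtype
  obtain ⟨i, hi⟩ := LinearMap.exists_comp_eq_of_ker_le u (K.mkQ ∘ₗ (LinearMap.ker f).subtype) hu
    fun z hz => (Submodule.Quotient.mk_eq_zero K).mpr ⟨z, hz, rfl⟩
  have hiu (z : LinearMap.ker f) : i (u z) = K.mkQ z := LinearMap.congr_fun hi z
  refine ⟨K, i, K.liftQ f (Submodule.map_subtype_le _ _), ?_, ?_, ?_⟩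
  · refine LinearMap.ker_eq_bot.mp (eq_bot_iff.mpr fun w hw => ?_)
    obtain ⟨z, rfl⟩ := hu w
    obtain ⟨z', hz', hzz'⟩ := (Submodule.Quotient.mk_eq_zero K).mp ((hiu z).symm.trans hw)
    rw [← Subtype.ext hzz']
    exact hz'
  · exact fun s => (hf s).elim fun m hm => ⟨K.mkQ m, hm⟩
  · refine le_antisymm ?_ fun q hq => ?_
    · rintro _ ⟨w, rfl⟩
      obtain ⟨z, rfl⟩ := hu w
      rw [hiu]
      exact z.2
    · obtain ⟨m, rfl⟩ := K.mkQ_surjective q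
      exact ⟨u ⟨m, hq⟩, hiu _⟩

section TorsGen

variable {A : Type} [Ring A]

theorem subset_torsGen (C : Set (ModA A)) : C ⊆ (torsGen C).1 :=
  Set.subset_sInter (by rintro _ ⟨T, hT, rfl⟩; exact hT)

theorem torsGen_le {C : Set (ModA A)} {T : Tors A} (h : C ⊆ T.1) : torsGen C ≤ T :=
  sInf_le h

theorem torsGen_mono {C D : Set (ModA A)} (h : C ⊆ D) : torsGen C ≤ torsGen D :=
  torsGen_le (h.trans (subset_torsGen D))

theorem isTorsionClass_setOf_forall_surjective (C : Set (ModA A)) (S : ModA A)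
    [IsSimpleModule Aᵐᵒᵖ S] :
    IsTorsionClass {Y : ModA A | ∀ f : Y →ₗ[Aᵐᵒᵖ] S, Surjective f →
      ∃ W ∈ C, ∃ g : W →ₗ[Aᵐᵒᵖ] S, Surjective g} := by
  have := IsSimpleModule.nontrivial Aᵐᵒᵖ S
  refine ⟨fun N hN f hf => ?_, fun M N hM q hq f hf => hM (f ∘ₗ q) (hf.comp hq),
    fun X Y Z i g hi hg hig hX hZ f hf => ?_⟩
  · exact absurd hf.subsingleton (not_subsingleton S)
  · rcases (f ∘ₗ i).surjective_or_eq_zero with hfi | hfi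
    · exact hX _ hfi
    · obtain ⟨h, rfl⟩ : ∃ h : Z →ₗ[Aᵐᵒᵖ] S, h ∘ₗ g = f := by
        refine LinearMap.exists_comp_eq_of_ker_le g f hg fun y hy => ?_
        obtain ⟨x, rfl⟩ : y ∈ LinearMap.range i := hig ▸ hy
        exact LinearMap.congr_fun hfi x
      exact hZ h (Surjective.of_comp (g := g) hf)

theorem exists_surjective_of_mem_torsGen {C : Set (ModA A)} {S Y : ModA A}
    [IsSimpleModule Aᵐᵒᵖ S] (hY : Y ∈ (torsGen C).1) (f : Y →ₗ[Aᵐᵒᵖ] S) (hf : Surjective f) :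
    ∃ W ∈ C, ∃ g : W →ₗ[Aᵐᵒᵖ] S, Surjective g :=
  torsGen_le (T := ⟨_, isTorsionClass_setOf_forall_surjective C S⟩)
    (fun W hW g hg => ⟨W, hW, g, hg⟩) hY f hf

theorem ModA.exists_surjective_isSimpleModule (M : ModA A) [Nontrivial M] :
    ∃ S : ModA A, IsSimpleModule Aᵐᵒᵖ S ∧ ∃ f : M →ₗ[Aᵐᵒᵖ] S, Surjective f := by
  obtain ⟨m, hm, -⟩ := (eq_top_or_exists_le_coatom (⊥ : Submodule Aᵐᵒᵖ M)).resolve_left bot_ne_top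
  exact ⟨⟨M ⧸ m⟩, isSimpleModule_iff_isCoatom.mpr hm, m.mkQ, m.mkQ_surjective⟩

theorem Tors.mem_bot_iff {M : ModA A} : M ∈ (⊥ : Tors A).1 ↔ Subsingleton M := by
  refine ⟨fun hM => ?_, (⊥ : Tors A).2.1 M⟩
  by_contra hM'
  have := not_subsingleton_iff_nontrivial.mp hM'
  obtain ⟨S, hS, f, hf⟩ := M.exists_surjective_isSimpleModule
  obtain ⟨W, hW, -⟩ := exists_surjective_of_mem_torsGen ((bot_le : ⊥ ≤ torsGen ∅) hM) f hf
  exact hW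

theorem nonempty_linearEquiv_of_mem_torsGen_singleton {S S' : ModA A}
    [IsSimpleModule Aᵐᵒᵖ S] [IsSimpleModule Aᵐᵒᵖ S'] (h : S' ∈ (torsGen {S}).1) :
    Nonempty (S ≃ₗ[Aᵐᵒᵖ] S') := by
  have := IsSimpleModule.nontrivial Aᵐᵒᵖ S'
  obtain ⟨_, rfl, g, hg⟩ := exists_surjective_of_mem_torsGen h LinearMap.id surjective_id
  exact ⟨.ofBijective g (g.bijective_of_ne_zero (LinearMap.ne_zero_of_surjective hg))⟩

theorem bot_covBy_torsGen_singleton (S : ModA A) [IsSimpleModule Aᵐᵒᵖ S] :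
    ⊥ ⋖ torsGen {S} := by
  have := IsSimpleModule.nontrivial Aᵐᵒᵖ S
  refine ⟨bot_lt_iff_ne_bot.mpr fun h => ?_, fun c hc hcS => ?_⟩
  · have hS := subset_torsGen {S} rfl
    rw [h, Tors.mem_bot_iff] at hS
    exact not_subsingleton S hS
  · obtain ⟨Y, hYc, hY⟩ := Set.not_subset.mp (hc.not_ge : ¬ c.1 ⊆ (⊥ : Tors A).1)
    have := not_subsingleton_iff_nontrivial.mp (mt Tors.mem_bot_iff.mpr hY)
    obtain ⟨S', _, f, hf⟩ := Y.exists_surjective_isSimpleModule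
    have hS'c : S' ∈ c.1 := c.2.2.1 Y S' hYc f hf
    obtain ⟨e⟩ := nonempty_linearEquiv_of_mem_torsGen_singleton (hcS.le hS'c)
    have hSc : S ∈ c.1 := c.2.2.1 S' S hS'c e.symm e.symm.surjective
    exact hcS.not_ge (torsGen_le (Set.singleton_subset_iff.mpr hSc))

theorem torsGen_singleton_inf_eq_bot {S S' : ModA A} [IsSimpleModule Aᵐᵒᵖ S]
    [IsSimpleModule Aᵐᵒᵖ S'] (h : ¬ Nonempty (S ≃ₗ[Aᵐᵒᵖ] S')) :
    torsGen {S} ⊓ torsGen {S'} = ⊥ := by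
  refine eq_bot_iff.mpr fun Y hY => Tors.mem_bot_iff.mpr ?_
  by_contra hY'
  have := not_subsingleton_iff_nontrivial.mp hY'
  obtain ⟨S'', _, f, hf⟩ := Y.exists_surjective_isSimpleModule
  obtain ⟨e⟩ := nonempty_linearEquiv_of_mem_torsGen_singleton
    ((torsGen {S}).2.2.1 Y S'' (inf_le_left (a := torsGen {S}) hY) f hf)
  obtain ⟨e'⟩ := nonempty_linearEquiv_of_mem_torsGen_singleton
    ((torsGen {S'}).2.2.1 Y S'' (inf_le_right (a := torsGen {S}) hY) f hf)
  exact h ⟨e.trans e'.symm⟩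

end TorsGen

section SubLeftPerp

variable {A : Type} [Ring A]

/-- For simple `S`: the modules not having `S` as a subquotient. -/
def subLeftPerp (S : ModA A) : Set (ModA A) :=
  {Y | ∀ (p : Submodule Aᵐᵒᵖ Y) (f : p →ₗ[Aᵐᵒᵖ] S), f = 0}

theorem isTorsionClass_subLeftPerp (S : ModA A) : IsTorsionClass (subLeftPerp S) := by
  refine ⟨fun N hN p f => ?_, fun M N hM q hq p f => ?_,
    fun X Y Z i g hi hg hig hX hZ p f => ?_⟩
  · exact Subsingleton.elim f 0
  · rw [← LinearMap.cancel_right (q.submoduleComap_surjective_of_surjective p hq),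
      LinearMap.zero_comp]
    exact hM _ _
  · have hker : LinearMap.ker (g.submoduleMap p) ≤ LinearMap.ker f := by
      rintro ⟨y, hy⟩ hgy
      obtain ⟨x, rfl⟩ : y ∈ LinearMap.range i := by
        rw [hig]; exact congrArg Subtype.val hgy
      exact LinearMap.congr_fun (hX (p.comap i) (f ∘ₗ i.submoduleComap p)) ⟨x, hy⟩
    obtain ⟨h, rfl⟩ := LinearMap.exists_comp_eq_of_ker_le _ f (g.submoduleMap_surjective p) hker
    rw [hZ _ h, LinearMap.zero_comp]

theorem mem_subLeftPerp_of_isSimpleModule {S S₀ : ModA A} [IsSimpleModule Aᵐᵒᵖ S]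
    [IsSimpleModule Aᵐᵒᵖ S₀] (h : ¬ Nonempty (S ≃ₗ[Aᵐᵒᵖ] S₀)) : S ∈ subLeftPerp S₀ := by
  intro p f
  rcases eq_bot_or_eq_top p with rfl | rfl
  · exact Subsingleton.elim f 0
  · rcases (f ∘ₗ Submodule.topEquiv.symm.toLinearMap).bijective_or_eq_zero with hf | hf
    · exact absurd ⟨.ofBijective _ hf⟩ h
    · exact (LinearMap.cancel_right Submodule.topEquiv.symm.surjective).mp
        (hf.trans (LinearMap.zero_comp _).symm)

theorem not_mem_torsGen_singleton_of_injective {S S₀ E : ModA A} [IsSimpleModule Aᵐᵒᵖ S]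
    [IsSimpleModule Aᵐᵒᵖ S₀] (h : ¬ Nonempty (S ≃ₗ[Aᵐᵒᵖ] S₀)) (i : S₀ →ₗ[Aᵐᵒᵖ] E)
    (hi : Injective i) : E ∉ (torsGen {S}).1 := fun hE => by
  have hE := torsGen_le (T := ⟨_, isTorsionClass_subLeftPerp S₀⟩)
    (Set.singleton_subset_iff.mpr (mem_subLeftPerp_of_isSimpleModule h)) hE
  have := IsSimpleModule.nontrivial Aᵐᵒᵖ S₀
  obtain ⟨s, hs⟩ := exists_ne (0 : S₀)
  refine hs ?_
  let e := LinearEquiv.ofInjective i hi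
  simpa using LinearMap.congr_fun (hE _ e.symm.toLinearMap) (e s)

end SubLeftPerp

section Semimodular

variable {A : Type} [Ring A]

def simpleQuotients (M : ModA A) : Set (ModA A) :=
  {S | IsSimpleModule Aᵐᵒᵖ S ∧ ∃ f : M →ₗ[Aᵐᵒᵖ] S, Surjective f}

theorem simpleQuotients_subset_of_surjective {M E : ModA A} (π : M →ₗ[Aᵐᵒᵖ] E)
    (hπ : Surjective π) : simpleQuotients E ⊆ simpleQuotients M :=
  fun _ ⟨hS, f, hf⟩ => ⟨hS, f ∘ₗ π, hf.comp hπ⟩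

theorem mem_torsGen_simpleQuotients_of_exact (h : UpperSemimodular (Tors A))
    {S₀ E S₁ : ModA A} [IsSimpleModule Aᵐᵒᵖ S₀] [IsSimpleModule Aᵐᵒᵖ S₁]
    (i : S₀ →ₗ[Aᵐᵒᵖ] E) (g : E →ₗ[Aᵐᵒᵖ] S₁) (hi : Injective i) (hg : Surjective g)
    (hig : LinearMap.range i = LinearMap.ker g) :
    S₀ ∈ (torsGen (simpleQuotients E)).1 := by
  by_contra hS₀
  have hS₁ : S₁ ∈ simpleQuotients E := ⟨‹_›, g, hg⟩
  have hne : ¬ Nonempty (S₁ ≃ₗ[Aᵐᵒᵖ] S₀) := fun ⟨e⟩ =>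
    hS₀ ((torsGen _).2.2.1 S₁ S₀ (subset_torsGen _ hS₁) e e.surjective)
  set a := torsGen {S₁}
  set b := torsGen {S₀}
  have hab : a ⊓ b = ⊥ := torsGen_singleton_inf_eq_bot hne
  obtain ⟨ha, -⟩ := h a b (hab ▸ bot_covBy_torsGen_singleton S₁)
    (hab ▸ bot_covBy_torsGen_singleton S₀)
  have hE : E ∈ (torsGen {E}).1 := subset_torsGen _ rfl
  have hS₀b : S₀ ∈ (a ⊔ b).1 := le_sup_right (a := a) (subset_torsGen _ rfl)
  have haE : a < torsGen {E} := by
    refine lt_of_le_of_ne (torsGen_le ?_) fun haE => ?_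
    · exact Set.singleton_subset_iff.mpr ((torsGen {E}).2.2.1 E S₁ hE g hg)
    · exact not_mem_torsGen_singleton_of_injective hne i hi (haE.ge hE)
  have hEj : torsGen {E} < a ⊔ b := by
    refine lt_of_le_of_ne (torsGen_le (Set.singleton_subset_iff.mpr ?_)) fun hEj => ?_
    · exact (a ⊔ b).2.2.2 S₀ E S₁ i g hi hg hig hS₀b
        (le_sup_left (b := b) (subset_torsGen _ rfl))
    · obtain ⟨_, rfl, q, hq⟩ := exists_surjective_of_mem_torsGen (hEj.ge hS₀b) LinearMap.id
        surjective_id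
      exact hS₀ (subset_torsGen _ ⟨‹_›, q, hq⟩)
  exact ha.2 haE hEj

variable [IsArtinianRing Aᵐᵒᵖ]

theorem mem_torsGen_simpleQuotients (h : UpperSemimodular (Tors A)) (M : ModA A) :
    M ∈ (torsGen (simpleQuotients M)).1 := by
  induction hn : Module.length Aᵐᵒᵖ M using WellFoundedLT.induction generalizing M with
  | _ n ih =>
    subst hn
    rcases subsingleton_or_nontrivial M with hM | hM
    · exact (torsGen _).2.1 M hM
    obtain ⟨S, hS, f, hf⟩ := M.exists_surjective_isSimpleModule
    let N : ModA A := ⟨LinearMap.ker f⟩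
    have hSM : simpleQuotients N ⊆ (torsGen (simpleQuotients M)).1 := fun W ⟨_, u, hu⟩ => by
      obtain ⟨K, i, g, hi, hg, hig⟩ := exists_exact_quotient_of_surjective f u hf hu
      exact torsGen_mono (simpleQuotients_subset_of_surjective K.mkQ K.mkQ_surjective)
        (mem_torsGen_simpleQuotients_of_exact h (E := ⟨M ⧸ K⟩) i g hi hg hig)
    have hN : N ∈ (torsGen (simpleQuotients M)).1 := by
      have := IsSimpleModule.nontrivial Aᵐᵒᵖ S
      refine torsGen_le hSM (ih _ (Submodule.length_lt ?_) N rfl)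
      exact LinearMap.ker_eq_top.not.mpr (LinearMap.ne_zero_of_surjective hf)
    exact (torsGen _).2.2.2 N M S (LinearMap.ker f).subtype f (Submodule.injective_subtype _) hf
      (Submodule.range_subtype _) hN (subset_torsGen _ ⟨hS, f, hf⟩)

theorem eq_torsGen_simples_of_upperSemimodular (h : UpperSemimodular (Tors A)) (T : Tors A) :
    T = torsGen {M : ModA A | IsSimpleModule Aᵐᵒᵖ M ∧ M ∈ T.1} := by
  refine le_antisymm (fun M hM => ?_) (torsGen_le fun _ hS => hS.2)
  have hSM : simpleQuotients M ⊆ {S : ModA A | IsSimpleModule Aᵐᵒᵖ S ∧ S ∈ T.1} :=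
    fun S ⟨hS, f, hf⟩ => ⟨hS, T.2.2.1 M S hM f hf⟩
  exact torsGen_mono hSM (mem_torsGen_simpleQuotients h M)

end Semimodular

theorem stmt19_general (K A : Type) [Field K] [Ring A] [Algebra K A]
    [FiniteDimensional K A]
    (h : UpperSemimodular (Tors A)) :
    ∀ T : Tors A, T = torsGen {M : ModA A | IsSimpleModule Aᵐᵒᵖ M.carrier ∧ M ∈ T.1} := by
  have : IsArtinianRing Aᵐᵒᵖ := .of_finite K Aᵐᵒᵖ
  exact eq_torsGen_simples_of_upperSemimodular h

/-- if `tors A` is upper semimodular, then every torsion class is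
generated by the simple modules it contains. -/
theorem stmt19 (K A : Type) [Field K] [IsAlgClosed K] [Ring A] [Algebra K A]
    [FiniteDimensional K A]
    (h : UpperSemimodular (Tors A)) :
    ∀ T : Tors A, T = torsGen {M : ModA A | IsSimpleModule Aᵐᵒᵖ M.carrier ∧ M ∈ T.1} :=
  stmt19_general K A h
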